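/- Let n be an even positive integer, let r and s be integers with 2 ≤ r ≤ s ≤ 2r−1, and let m = s−r+1. Then ex(n, LP^{(r)}_s) = ex(n, P^{(r)}_s) = C(n,r) − 2·h(n,r,m) − h(n,r−1,m), where C(n,r) is the binomial coefficient. -/

import Mathlib

open Finset
open scoped Classical

/-- Edge set of the natural tight path `P^{(r)}_s` on vertex set `[s] = {1,…,s}`:
all intervals of `r` consecutive integers. -/
def pathEdges (r s : ℕ) : Finset (Finset ℕ) :=
  (Finset.Icc 1 (s - r + 1)).image (fun i => Finset.Icc i (i + r - 1))

/-- Edge set of the loose path `LP^{(r)}_s`: only the first and last edges. -/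
def loosePathEdges (r s : ℕ) : Finset (Finset ℕ) :=
  {Finset.Icc 1 r, Finset.Icc (s - r + 1) s}

/-- `C` is the edge set of a copy in `K^{(r)}_n` of the ordered hypergraph with
vertex set `[s]` and edge set `E`, i.e. the image of `E` under a strictly
increasing map `[s] → [n]`. -/
def IsCopy (n s : ℕ) (E : Finset (Finset ℕ)) (C : Finset (Finset ℕ)) : Prop :=
  ∃ f : ℕ → ℕ, StrictMonoOn f ↑(Finset.Icc 1 s) ∧
    (∀ v ∈ Finset.Icc 1 s, f v ∈ Finset.Icc 1 n) ∧
    C = E.image (fun e => e.image f)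

/-- A transversal: a set `T` of `r`-element subsets of `[n]` meeting every copy. -/
def IsTransversal (n r s : ℕ) (E : Finset (Finset ℕ)) (T : Finset (Finset ℕ)) : Prop :=
  T ⊆ (Finset.Icc 1 n).powersetCard r ∧
  ∀ C : Finset (Finset ℕ), IsCopy n s E C → ∃ e ∈ C, e ∈ T

/-- The transversal number `τ(n,H)`. -/
noncomputable def tau (n r s : ℕ) (E : Finset (Finset ℕ)) : ℕ :=
  sInf {m | ∃ T : Finset (Finset ℕ), IsTransversal n r s E T ∧ T.card = m}

/-- A packing: an edge-disjoint family of copies. -/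
def IsPacking (n s : ℕ) (E : Finset (Finset ℕ)) (P : Finset (Finset (Finset ℕ))) : Prop :=
  (∀ C ∈ P, IsCopy n s E C) ∧
  ∀ C ∈ P, ∀ C' ∈ P, C ≠ C' → Disjoint C C'

/-- The packing number `ν(n,H)`. -/
noncomputable def nu (n s : ℕ) (E : Finset (Finset ℕ)) : ℕ :=
  sSup {m | ∃ P : Finset (Finset (Finset ℕ)), IsPacking n s E P ∧ P.card = m}

/-- The ordered Turán number: maximum number of edges of a subgraph of
`K^{(r)}_n` containing no copy of the hypergraph with edge set `E`. -/
noncomputable def exNum (n r s : ℕ) (E : Finset (Finset ℕ)) : ℕ :=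
  sSup {m | ∃ G ⊆ (Finset.Icc 1 n).powersetCard r,
    (∀ C : Finset (Finset ℕ), IsCopy n s E C → ¬ C ⊆ G) ∧ G.card = m}

/-- `S ⊆ [n]` is `m`-left-biased. -/
def LeftBiased (n m : ℕ) (S : Finset ℕ) : Prop :=
  ∃ u ≤ n / 2, (S ∩ Finset.Icc 1 u).card = m ∧ S ∩ Finset.Icc (n + 1 - u) n = ∅

/-- `h(n,t,m)`: the number of `m`-left-biased `t`-element subsets of `[n]`. -/
noncomputable def hcount (n t m : ℕ) : ℕ :=
  (((Finset.Icc 1 n).powersetCard t).filter (LeftBiased n m)).card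

/-- A fractional transversal. -/
def IsFracTransversal (n r s : ℕ) (E : Finset (Finset ℕ)) (w : Finset ℕ → ℝ) : Prop :=
  (∀ e ∈ (Finset.Icc 1 n).powersetCard r, 0 ≤ w e) ∧
  ∀ C : Finset (Finset ℕ), IsCopy n s E C → 1 ≤ ∑ e ∈ C, w e

/-- The fractional transversal number `τ*(n,H)`. -/
noncomputable def tauStar (n r s : ℕ) (E : Finset (Finset ℕ)) : ℝ :=
  sInf {x : ℝ | ∃ w : Finset ℕ → ℝ, IsFracTransversal n r s E w ∧
    x = ∑ e ∈ (Finset.Icc 1 n).powersetCard r, w e}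

/-- A `k`-edge-labeling of the ordered complete graph on `[n]`. -/
def IsLabeling (n k : ℕ) (φ : ℕ → ℕ → ℕ) : Prop :=
  ∀ u v : ℕ, u ∈ Finset.Icc 1 n → v ∈ Finset.Icc 1 n → u < v → φ u v ∈ Finset.Icc 1 k

/-- The number of good triples `u < v < w` in `[n]` (those with `φ(uv) < φ(vw)`). -/
def goodCount (n : ℕ) (φ : ℕ → ℕ → ℕ) : ℕ :=
  (((Finset.Icc 1 n) ×ˢ (Finset.Icc 1 n) ×ˢ (Finset.Icc 1 n)).filter
    (fun p => p.1 < p.2.1 ∧ p.2.1 < p.2.2 ∧ φ p.1 p.2.1 < φ p.2.1 p.2.2)).card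

/-- The number of bad triples `u < v < w` in `[n]` (those with `φ(uv) ≥ φ(vw)`). -/
def badCount (n : ℕ) (φ : ℕ → ℕ → ℕ) : ℕ :=
  (((Finset.Icc 1 n) ×ˢ (Finset.Icc 1 n) ×ˢ (Finset.Icc 1 n)).filter
    (fun p => p.1 < p.2.1 ∧ p.2.1 < p.2.2 ∧ ¬ φ p.1 p.2.1 < φ p.2.1 p.2.2)).card

/-- `f(n,k)`: the maximum number of good triples over all `k`-edge-labelings of `[n]`. -/
noncomputable def fmax (n k : ℕ) : ℕ :=
  sSup {m | ∃ φ : ℕ → ℕ → ℕ, IsLabeling n k φ ∧ goodCount n φ = m}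

/-- A labeling is monotone if `φ(uv) ≤ φ(vw)` whenever `u < v < w` in `[n]`. -/
def IsMonotone (n : ℕ) (φ : ℕ → ℕ → ℕ) : Prop :=
  ∀ u v w : ℕ, u ∈ Finset.Icc 1 n → v ∈ Finset.Icc 1 n → w ∈ Finset.Icc 1 n →
    u < v → v < w → φ u v ≤ φ v w

/-- `Φ_L(v) = max{φ(uv) : u < v}`, with `Φ_L(1) = 0`. -/
def PhiL (φ : ℕ → ℕ → ℕ) (v : ℕ) : ℕ := (Finset.Ico 1 v).sup (fun u => φ u v)

/-- `Φ_R(v) = min{φ(vw) : v < w ≤ n}`, with `Φ_R(n) = k+1`. -/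
noncomputable def PhiR (n k : ℕ) (φ : ℕ → ℕ → ℕ) (v : ℕ) : ℕ :=
  if v = n then k + 1 else sInf {m | ∃ w ∈ Finset.Ioc v n, φ v w = m}

/-- `X_i = {v ∈ [n] : Φ_L(v) = i}`. -/
def XL (n : ℕ) (φ : ℕ → ℕ → ℕ) (i : ℕ) : Finset ℕ :=
  (Finset.Icc 1 n).filter (fun v => PhiL φ v = i)

/-- `X̂_i = {v ∈ [n] : Φ_R(v) = i}`. -/
noncomputable def XR (n k : ℕ) (φ : ℕ → ℕ → ℕ) (i : ℕ) : Finset ℕ :=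
  (Finset.Icc 1 n).filter (fun v => PhiR n k φ v = i)


/-!
Write `A = {a₁ < ⋯ < a_r}` for an `r`-subset of `[n]` and `m = s - r + 1`. Call `A` left-heavy
if `a_m + a_r ≤ n + 1` and right-heavy if `a₁ + a_{r-m+1} ≥ n + 2`; no set is both.

Upper bound: a left-heavy `A` extends to the right, by the translates `n + 1 - a_m + a_j`
(`j < m`), to a tight path `P^{(r)}_s` each of whose `m` edges determines `A`; right-heavy sets
extend to the left in the same way. So a `P^{(r)}_s`-free family misses a different edge for
every heavy set.

Lower bound: for a copy of `LP^{(r)}_s` given by `f`, both conditions compare the same sum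
`f(m) + f(r)` with `n + 1` (on the first and on the last edge), so one of its two edges is heavy
and the non-heavy sets form an `LP^{(r)}_s`-free family. As `LP^{(r)}_s ⊆ P^{(r)}_s`, both
extremal numbers are `C(n,r)` minus the number of heavy sets.

Counting: a `t`-set is `m`-left-biased iff `a_m + a_t ≤ n`. So the left-heavy sets with
`a_m + a_r ≤ n` are the `m`-left-biased `r`-sets, `x ↦ n + 1 - x` matches the right-heavy sets
with them too, and deleting `a_r` matches the left-heavy sets with `a_m + a_r = n + 1` with the
`m`-left-biased `(r-1)`-sets.
-/

namespace Finset

/-- The `k`-th smallest element of `A`, counting from `0`; junk value `0` when `#A ≤ k`. -/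
noncomputable def nth (A : Finset ℕ) (k : ℕ) : ℕ :=
  if h : k < A.card then A.orderEmbOfFin rfl ⟨k, h⟩ else 0

variable {A B : Finset ℕ} {j k k' n t x : ℕ}

theorem nth_strictMonoOn (A : Finset ℕ) : StrictMonoOn A.nth (Set.Iio A.card) := by
  intro k hk k' hk' h
  simp only [nth, dif_pos (show k < A.card from hk), dif_pos (show k' < A.card from hk')]
  exact (A.orderEmbOfFin rfl).strictMono (show (⟨k, hk⟩ : Fin A.card) < ⟨k', hk'⟩ from h)

theorem nth_lt_nth (h : k < k') (h' : k' < A.card) : A.nth k < A.nth k' :=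
  A.nth_strictMonoOn (h.trans h') h' h

theorem nth_le_nth (h : k ≤ k') (h' : k' < A.card) : A.nth k ≤ A.nth k' :=
  A.nth_strictMonoOn.monotoneOn (lt_of_le_of_lt h h') h' h

theorem nth_mem (h : k < A.card) : A.nth k ∈ A := by
  rw [nth, dif_pos h]
  exact A.orderEmbOfFin_mem rfl _

theorem nth_mem_Icc (hA : A ⊆ Icc 1 n) (h : k < A.card) : 1 ≤ A.nth k ∧ A.nth k ≤ n :=
  mem_Icc.1 (hA (nth_mem h))

theorem card_image_range_of_strictMonoOn {f : ℕ → ℕ} (hf : StrictMonoOn f (Set.Iio t)) :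
    ((range t).image f).card = t := by
  rw [card_image_of_injOn (by rw [coe_range]; exact hf.injOn), card_range]

theorem nth_image_range {f : ℕ → ℕ} (hf : StrictMonoOn f (Set.Iio t)) (hk : k < t) :
    ((range t).image f).nth k = f k := by
  set B := (range t).image f
  have hB : B.card = t := card_image_range_of_strictMonoOn hf
  have hunique := orderEmbOfFin_unique (s := B) rfl (f := fun i => f i)
    (fun i => mem_image_of_mem f (mem_range.2 (hB ▸ i.2)))
    (fun i j hij => hf (show (i : ℕ) < t from hB ▸ i.2) (show (j : ℕ) < t from hB ▸ j.2) hij)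
  rw [nth, dif_pos (hB ▸ hk)]
  exact (congrFun hunique ⟨k, hB ▸ hk⟩).symm

theorem image_range_nth (A : Finset ℕ) : (range A.card).image A.nth = A :=
  eq_of_subset_of_card_le (image_subset_iff.2 fun _ hk => nth_mem (mem_range.1 hk))
    (card_image_range_of_strictMonoOn A.nth_strictMonoOn).ge

theorem exists_nth_eq (hx : x ∈ A) : ∃ k < A.card, A.nth k = x := by
  rw [← image_range_nth A] at hx
  simpa using hx

theorem le_nth_card_sub_one (hx : x ∈ A) : x ≤ A.nth (A.card - 1) := by
  obtain ⟨k, hk, rfl⟩ := exists_nth_eq hx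
  exact nth_le_nth (by omega) (by omega)

theorem ext_nth (hA : A.card = t) (hB : B.card = t) (h : ∀ k < t, A.nth k = B.nth k) :
    A = B := by
  rw [← image_range_nth A, ← image_range_nth B, hA, hB]
  exact image_congr fun k hk => h k (mem_range.1 hk)

theorem filter_lt_nth (hj : j < A.card) : A.filter (· < A.nth j) = (range j).image A.nth := by
  ext x
  simp only [mem_filter, mem_image, mem_range]
  constructor
  · rintro ⟨hx, hxj⟩
    obtain ⟨k, hk, rfl⟩ := exists_nth_eq hx
    exact ⟨k, lt_of_not_ge fun hjk => (nth_le_nth hjk hk).not_gt hxj, rfl⟩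
  · rintro ⟨k, hk, rfl⟩
    exact ⟨nth_mem (hk.trans hj), nth_lt_nth hk hj⟩

theorem card_filter_lt_nth (hj : j < A.card) : (A.filter (· < A.nth j)).card = j := by
  rw [filter_lt_nth hj]
  exact card_image_range_of_strictMonoOn (A.nth_strictMonoOn.mono (Set.Iio_subset_Iio hj.le))

theorem card_filter_le_nth (hj : j < A.card) : (A.filter (· ≤ A.nth j)).card = j + 1 := by
  have hsplit : A.filter (· ≤ A.nth j) = insert (A.nth j) (A.filter (· < A.nth j)) := by
    ext x
    simp only [mem_filter, mem_insert]
    constructor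
    · rintro ⟨hx, hxj⟩
      exact hxj.eq_or_lt.imp id fun h => ⟨hx, h⟩
    · rintro (rfl | ⟨hx, hxj⟩)
      exacts [⟨nth_mem hj, le_rfl⟩, ⟨hx, hxj.le⟩]
  rw [hsplit, card_insert_of_notMem (by simp), card_filter_lt_nth hj]

theorem nth_eq_of_forall_le (hA : A.card = t + 1) (hx : x ∈ A) (hmax : ∀ y ∈ A, y ≤ x) :
    A.nth t = x := by
  obtain ⟨k, hk, rfl⟩ := exists_nth_eq hx
  obtain rfl | hkt : k = t ∨ k < t := by omega
  · rfl
  · exact absurd (hmax _ (nth_mem (by omega))) (nth_lt_nth hkt (by omega)).not_ge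

theorem erase_nth_last (hA : A.card = t + 1) : A.erase (A.nth t) = (range t).image A.nth := by
  have hlast : A.nth t ∉ (range t).image A.nth := fun h => by
    obtain ⟨k, hk, hkt⟩ := mem_image.1 h
    exact (nth_lt_nth (mem_range.1 hk) (by omega)).ne hkt
  have hinsert : insert (A.nth t) ((range t).image A.nth) = A := by
    rw [← image_insert, ← range_add_one, ← hA, image_range_nth]
  calc A.erase (A.nth t) = (insert (A.nth t) ((range t).image A.nth)).erase (A.nth t) := by
        rw [hinsert]
    _ = (range t).image A.nth := erase_insert hlast

theorem nth_erase_nth_last (hA : A.card = t + 1) (hk : k < t) :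
    (A.erase (A.nth t)).nth k = A.nth k := by
  rw [erase_nth_last hA]
  exact nth_image_range (A.nth_strictMonoOn.mono (Set.Iio_subset_Iio (by omega))) hk

theorem nth_insert_of_forall_lt (hB : B.card = t) (hx : ∀ y ∈ B, y < x) :
    (insert x B).nth t = x ∧ ∀ k < t, (insert x B).nth k = B.nth k := by
  have hxB : x ∉ B := fun h => (hx x h).false
  have hcard : (insert x B).card = t + 1 := by rw [card_insert_of_notMem hxB, hB]
  have hlast : (insert x B).nth t = x :=
    nth_eq_of_forall_le hcard (mem_insert_self x B)
      fun y hy => (mem_insert.1 hy).elim le_of_eq fun h => (hx y h).le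
  refine ⟨hlast, fun k hk => ?_⟩
  rw [← nth_erase_nth_last hcard hk, hlast, erase_insert hxB]

theorem nth_image_reflect (hA : A ⊆ Icc 1 n) (hk : k < A.card) :
    (A.image (n + 1 - ·)).nth k = n + 1 - A.nth (A.card - 1 - k) := by
  have hreindex : A.image (n + 1 - ·) =
      (range A.card).image (fun k => n + 1 - A.nth (A.card - 1 - k)) := by
    ext y
    simp only [mem_image, mem_range]
    constructor
    · rintro ⟨x, hx, rfl⟩
      obtain ⟨k, hk, rfl⟩ := exists_nth_eq hx
      exact ⟨A.card - 1 - k, by omega, by rw [show A.card - 1 - (A.card - 1 - k) = k by omega]⟩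
    · rintro ⟨k, hk, rfl⟩
      exact ⟨_, nth_mem (by omega), rfl⟩
  rw [hreindex]
  refine nth_image_range (fun a (ha : a < A.card) b (hb : b < A.card) hab => ?_) hk
  have := nth_lt_nth (show A.card - 1 - b < A.card - 1 - a by omega)
    (show A.card - 1 - a < A.card by omega)
  have := (nth_mem_Icc hA (show A.card - 1 - a < A.card by omega)).2
  omega

theorem Icc_eq_image_range {i j r : ℕ} (hr : j + 1 = i + r) :
    Icc i j = (range r).image (i + ·) := by
  ext v
  simp only [mem_Icc, mem_image, mem_range]
  constructor
  · rintro ⟨hiv, hvj⟩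
    exact ⟨v - i, by omega, by omega⟩
  · rintro ⟨k, hk, rfl⟩
    omega

theorem nth_image_Icc {i j r : ℕ} {f : ℕ → ℕ} (hf : StrictMonoOn f ↑(Icc i j))
    (hr : j + 1 = i + r) (hk : k < r) : ((Icc i j).image f).nth k = f (i + k) := by
  rw [Icc_eq_image_range hr, image_image]
  refine nth_image_range (fun a (ha : a < r) b (hb : b < r) hab => hf ?_ ?_ ?_) hk
  all_goals simp only [coe_Icc, Set.mem_Icc]; omega

theorem image_Icc_mem_powersetCard {i j r : ℕ} {f : ℕ → ℕ} (hf : StrictMonoOn f ↑(Icc i j))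
    (hmaps : ∀ v ∈ Icc i j, f v ∈ Icc 1 n) (hr : j + 1 = i + r) :
    (Icc i j).image f ∈ (Icc 1 n).powersetCard r := by
  refine mem_powersetCard.2 ⟨image_subset_iff.2 hmaps, ?_⟩
  rw [card_image_of_injOn hf.injOn, Nat.card_Icc]
  omega

end Finset

section Counting

variable {n m r t : ℕ} {A : Finset ℕ}

theorem leftBiased_iff (hA : A ∈ (Icc 1 n).powersetCard t) (hm : 1 ≤ m) :
    LeftBiased n m A ↔ m ≤ t ∧ A.nth (m - 1) + A.nth (t - 1) ≤ n := by
  obtain ⟨hA1, rfl⟩ := mem_powersetCard.1 hA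
  constructor
  · rintro ⟨u, hu, hcard, hdisj⟩
    have hmt : m ≤ A.card := hcard ▸ card_le_card inter_subset_left
    have hmu : A.nth (m - 1) ≤ u := by
      by_contra! hum
      have hsub : A ∩ Icc 1 u ⊆ A.filter (· < A.nth (m - 1)) := fun x hx => by
        rw [mem_inter, mem_Icc] at hx
        exact mem_filter.2 ⟨hx.1, by omega⟩
      have := card_le_card hsub
      rw [hcard, card_filter_lt_nth (by omega)] at this
      omega
    have hlast : A.nth (A.card - 1) ∉ Icc (n + 1 - u) n := fun h =>
      (eq_empty_iff_forall_notMem.1 hdisj) _ (mem_inter.2 ⟨nth_mem (by omega), h⟩)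
    have := (nth_mem_Icc hA1 (show A.card - 1 < A.card by omega)).2
    rw [mem_Icc] at hlast
    exact ⟨hmt, by omega⟩
  · rintro ⟨hmt, hsum⟩
    have hmono := nth_le_nth (show m - 1 ≤ A.card - 1 by omega) (show A.card - 1 < A.card by omega)
    refine ⟨A.nth (m - 1), by omega, ?_, ?_⟩
    · have : A ∩ Icc 1 (A.nth (m - 1)) = A.filter (· ≤ A.nth (m - 1)) := by
        ext x
        simp only [mem_inter, mem_Icc, mem_filter]
        exact ⟨fun ⟨hx, _, h⟩ => ⟨hx, h⟩, fun ⟨hx, h⟩ => ⟨hx, (mem_Icc.1 (hA1 hx)).1, h⟩⟩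
      rw [this, card_filter_le_nth (by omega)]
      omega
    · refine eq_empty_iff_forall_notMem.2 fun x hx => ?_
      rw [mem_inter, mem_Icc] at hx
      have := le_nth_card_sub_one hx.1
      omega

theorem hcount_eq_card_filter (hm : 1 ≤ m) :
    hcount n t m = (((Icc 1 n).powersetCard t).filter
      (fun A => m ≤ t ∧ A.nth (m - 1) + A.nth (t - 1) ≤ n)).card := by
  rw [hcount, filter_congr fun A hA => leftBiased_iff hA hm]

theorem image_reflect_mem_powersetCard (hA : A ∈ (Icc 1 n).powersetCard t) :
    A.image (n + 1 - ·) ∈ (Icc 1 n).powersetCard t := by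
  obtain ⟨hA1, rfl⟩ := mem_powersetCard.1 hA
  refine mem_powersetCard.2 ⟨image_subset_iff.2 fun x hx => ?_, card_image_of_injOn ?_⟩
  · have := mem_Icc.1 (hA1 hx)
    exact mem_Icc.2 (by omega)
  · intro x hx y hy (h : n + 1 - x = n + 1 - y)
    have := mem_Icc.1 (hA1 hx)
    have := mem_Icc.1 (hA1 hy)
    omega

theorem image_reflect_image_reflect (hA : A ⊆ Icc 1 n) :
    (A.image (n + 1 - ·)).image (n + 1 - ·) = A := by
  rw [image_image]
  conv_rhs => rw [← image_id (s := A)]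
  refine image_congr fun x hx => ?_
  have := mem_Icc.1 (hA hx)
  simp only [Function.comp_apply, id]
  omega

end Counting

-- For `A = {a₁ < ⋯ < a_r}` (`nth` counts from `0`): `a_m + a_r ≤ n + 1`, resp.
-- `a₁ + a_{r-m+1} ≥ n + 2`.
def IsLeftHeavy (n r m : ℕ) (A : Finset ℕ) : Prop := A.nth (m - 1) + A.nth (r - 1) ≤ n + 1

def IsRightHeavy (n r m : ℕ) (A : Finset ℕ) : Prop := n + 2 ≤ A.nth 0 + A.nth (r - m)

noncomputable def heavySets (n r m : ℕ) : Finset (Finset ℕ) :=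
  ((Icc 1 n).powersetCard r).filter fun A => IsLeftHeavy n r m A ∨ IsRightHeavy n r m A

section Heavy

variable {n m r : ℕ} {A : Finset ℕ}

theorem not_isRightHeavy_of_isLeftHeavy (hm : 1 ≤ m) (hmr : m ≤ r) (hA : A.card = r)
    (hL : IsLeftHeavy n r m A) : ¬ IsRightHeavy n r m A := by
  have := nth_le_nth (show 0 ≤ m - 1 by omega) (show m - 1 < A.card by omega)
  have := nth_le_nth (show r - m ≤ r - 1 by omega) (show r - 1 < A.card by omega)
  unfold IsLeftHeavy at hL
  unfold IsRightHeavy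
  omega

theorem card_filter_isRightHeavy (hm : 1 ≤ m) (hmr : m ≤ r) :
    (((Icc 1 n).powersetCard r).filter (IsRightHeavy n r m)).card = hcount n r m := by
  rw [hcount_eq_card_filter hm]
  refine card_nbij' (·.image (n + 1 - ·)) (·.image (n + 1 - ·)) (fun A hA => ?_) (fun B hB => ?_)
    (fun A hA => image_reflect_image_reflect (mem_powersetCard.1 (mem_filter.1 hA).1).1)
    (fun B hB => image_reflect_image_reflect (mem_powersetCard.1 (mem_filter.1 hB).1).1)
  · obtain ⟨hAP, hR⟩ := mem_filter.1 hA
    obtain ⟨hA1, hA2⟩ := mem_powersetCard.1 hAP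
    refine mem_filter.2 ⟨image_reflect_mem_powersetCard hAP, hmr, ?_⟩
    rw [nth_image_reflect hA1 (by omega), nth_image_reflect hA1 (by omega), hA2,
      show r - 1 - (m - 1) = r - m by omega, show r - 1 - (r - 1) = 0 by omega]
    have := nth_mem_Icc hA1 (show 0 < A.card by omega)
    have := nth_mem_Icc hA1 (show r - m < A.card by omega)
    unfold IsRightHeavy at hR
    omega
  · obtain ⟨hBP, -, hsum⟩ := mem_filter.1 hB
    obtain ⟨hB1, hB2⟩ := mem_powersetCard.1 hBP
    refine mem_filter.2 ⟨image_reflect_mem_powersetCard hBP, ?_⟩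
    unfold IsRightHeavy
    rw [nth_image_reflect hB1 (by omega), nth_image_reflect hB1 (by omega), hB2,
      show r - 1 - 0 = r - 1 by omega, show r - 1 - (r - m) = m - 1 by omega]
    have := nth_mem_Icc hB1 (show m - 1 < B.card by omega)
    have := nth_mem_Icc hB1 (show r - 1 < B.card by omega)
    omega

/-- Deleting the largest element `a_{t+1} = n + 1 - a_m` is a bijection onto the `t`-sets with
`a_m + a_t ≤ n`. For `m = t + 1` both sides are empty: `2 a_m = n + 1` is impossible for even `n`.
-/
theorem card_filter_nth_add_nth_last_eq (hev : Even n) (hm : 1 ≤ m) {t : ℕ} (hmt : m ≤ t + 1) :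
    (((Icc 1 n).powersetCard (t + 1)).filter
      fun A => A.nth (m - 1) + A.nth t = n + 1).card = hcount n t m := by
  rw [hcount_eq_card_filter hm]
  obtain rfl | hmt : m = t + 1 ∨ m ≤ t := by omega
  · obtain ⟨k, rfl⟩ := hev
    rw [filter_false_of_mem fun A _ => by simp only [Nat.add_sub_cancel]; omega,
      filter_false_of_mem fun B _ => by omega]
  refine card_nbij' (fun A => A.erase (A.nth t)) (fun B => insert (n + 1 - B.nth (m - 1)) B)
    (fun A hA => ?_) (fun B hB => ?_) (fun A hA => ?_) (fun B hB => ?_)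
  · obtain ⟨hAP, hsum⟩ := mem_filter.1 hA
    obtain ⟨hA1, hA2⟩ := mem_powersetCard.1 hAP
    have := nth_lt_nth (show t - 1 < t by omega) (show t < A.card by omega)
    refine mem_filter.2 ⟨mem_powersetCard.2 ⟨(erase_subset _ _).trans hA1, ?_⟩, hmt, ?_⟩
    · rw [card_erase_of_mem (nth_mem (by omega)), hA2, Nat.add_sub_cancel]
    · rw [nth_erase_nth_last hA2 (by omega), nth_erase_nth_last hA2 (by omega)]
      omega
  · obtain ⟨hBP, -, hsum⟩ := mem_filter.1 hB
    obtain ⟨hB1, hB2⟩ := mem_powersetCard.1 hBP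
    have hb := nth_mem_Icc hB1 (show m - 1 < B.card by omega)
    obtain ⟨hlast, hinit⟩ := nth_insert_of_forall_lt hB2 (x := n + 1 - B.nth (m - 1))
      fun y hy => by have := hB2 ▸ le_nth_card_sub_one hy; omega
    refine mem_filter.2 ⟨mem_powersetCard.2 ⟨insert_subset (mem_Icc.2 (by omega)) hB1, ?_⟩, ?_⟩
    · rw [card_insert_of_notMem fun h => by have := hB2 ▸ le_nth_card_sub_one h; omega, hB2]
    · rw [hlast, hinit _ (by omega)]
      omega
  · obtain ⟨hAP, hsum⟩ := mem_filter.1 hA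
    obtain ⟨-, hA2⟩ := mem_powersetCard.1 hAP
    dsimp only
    rw [nth_erase_nth_last hA2 (by omega), show n + 1 - A.nth (m - 1) = A.nth t by omega]
    exact insert_erase (nth_mem (by omega))
  · obtain ⟨hBP, -, hsum⟩ := mem_filter.1 hB
    obtain ⟨-, hB2⟩ := mem_powersetCard.1 hBP
    have hlt : ∀ y ∈ B, y < n + 1 - B.nth (m - 1) := fun y hy => by
      have := hB2 ▸ le_nth_card_sub_one hy
      omega
    dsimp only
    rw [(nth_insert_of_forall_lt hB2 hlt).1]
    exact erase_insert fun h => (hlt _ h).false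

theorem card_filter_isLeftHeavy (hev : Even n) (hm : 1 ≤ m) (hmr : m ≤ r) :
    (((Icc 1 n).powersetCard r).filter (IsLeftHeavy n r m)).card =
      hcount n r m + hcount n (r - 1) m := by
  obtain ⟨t, rfl⟩ : ∃ t, r = t + 1 := ⟨r - 1, by omega⟩
  have hsplit : ((Icc 1 n).powersetCard (t + 1)).filter (IsLeftHeavy n (t + 1) m) =
      (((Icc 1 n).powersetCard (t + 1)).filter
        fun A => m ≤ t + 1 ∧ A.nth (m - 1) + A.nth (t + 1 - 1) ≤ n) ∪
      ((Icc 1 n).powersetCard (t + 1)).filter fun A => A.nth (m - 1) + A.nth t = n + 1 := by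
    rw [← filter_or]
    exact filter_congr fun A _ => by unfold IsLeftHeavy; simp only [Nat.add_sub_cancel]; omega
  rw [hsplit, card_union_of_disjoint (disjoint_filter.2 fun A _ h => by
      simp only [Nat.add_sub_cancel] at h; omega),
    ← hcount_eq_card_filter hm, card_filter_nth_add_nth_last_eq hev hm hmr,
    Nat.add_sub_cancel]

theorem card_heavySets (hev : Even n) (hm : 1 ≤ m) (hmr : m ≤ r) :
    (heavySets n r m).card = 2 * hcount n r m + hcount n (r - 1) m := by
  rw [heavySets, filter_or, card_union_of_disjoint (disjoint_filter.2 fun A hA hL =>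
      not_isRightHeavy_of_isLeftHeavy hm hmr (mem_powersetCard.1 hA).2 hL),
    card_filter_isLeftHeavy hev hm hmr, card_filter_isRightHeavy hm hmr]
  ring

end Heavy

/-- Positions `1, …, r` carry `a₁ < ⋯ < a_r` and positions `r + j`, `1 ≤ j < m`, carry
`n + 1 - a_m + a_j`. -/
noncomputable def rightExt (n r m : ℕ) (A : Finset ℕ) (v : ℕ) : ℕ :=
  if v ≤ r then A.nth (v - 1) else n + 1 + A.nth (v - r - 1) - A.nth (m - 1)

/-- Positions `m, …, r + m - 1` carry `a₁ < ⋯ < a_r` and positions `j < m` carry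
`a_{r-m+1+j} - a_{r-m+1}`. -/
noncomputable def leftExt (r m : ℕ) (A : Finset ℕ) (v : ℕ) : ℕ :=
  if v < m then A.nth (r - m + v) - A.nth (r - m) else A.nth (v - m)

section Extensions

variable {n m r : ℕ} {A A' : Finset ℕ}

theorem strictMonoOn_rightExt (hmr : m ≤ r)
    (hA : A ∈ (Icc 1 n).powersetCard r) (hL : IsLeftHeavy n r m A) :
    StrictMonoOn (rightExt n r m A) ↑(Icc 1 (r + m - 1)) := by
  obtain ⟨hA1, hA2⟩ := mem_powersetCard.1 hA
  intro v hv v' hv' h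
  obtain ⟨hv1, -⟩ := mem_Icc.1 hv
  obtain ⟨-, hv'⟩ := mem_Icc.1 hv'
  unfold IsLeftHeavy at hL
  unfold rightExt
  rcases le_or_gt v' r with hc | hc
  · rw [if_pos (show v ≤ r by omega), if_pos hc]
    exact nth_lt_nth (by omega) (by omega)
  rw [if_neg (show ¬ v' ≤ r by omega)]
  have := (nth_mem_Icc hA1 (show v' - r - 1 < A.card by omega)).1
  have := (nth_mem_Icc hA1 (show m - 1 < A.card by omega)).2
  rcases le_or_gt v r with hd | hd
  · rw [if_pos hd]
    have := nth_le_nth (show v - 1 ≤ r - 1 by omega) (show r - 1 < A.card by omega)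
    omega
  · rw [if_neg (show ¬ v ≤ r by omega)]
    have := nth_lt_nth (show v - r - 1 < v' - r - 1 by omega) (show v' - r - 1 < A.card by omega)
    omega

theorem rightExt_mem_Icc (hmr : m ≤ r) (hA : A ∈ (Icc 1 n).powersetCard r)
    {v : ℕ} (hv : v ∈ Icc 1 (r + m - 1)) : rightExt n r m A v ∈ Icc 1 n := by
  obtain ⟨hA1, hA2⟩ := mem_powersetCard.1 hA
  obtain ⟨hv1, hv⟩ := mem_Icc.1 hv
  rw [rightExt, mem_Icc]
  rcases le_or_gt v r with hc | hc
  · rw [if_pos hc]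
    exact nth_mem_Icc hA1 (by omega)
  · rw [if_neg (show ¬ v ≤ r by omega)]
    have := (nth_mem_Icc hA1 (show v - r - 1 < A.card by omega)).1
    have := (nth_mem_Icc hA1 (show m - 1 < A.card by omega)).2
    have := nth_lt_nth (show v - r - 1 < m - 1 by omega) (show m - 1 < A.card by omega)
    omega

theorem strictMonoOn_leftExt (hmr : m ≤ r)
    (hA : A ∈ (Icc 1 n).powersetCard r) (hR : IsRightHeavy n r m A) :
    StrictMonoOn (leftExt r m A) ↑(Icc 1 (r + m - 1)) := by
  obtain ⟨hA1, hA2⟩ := mem_powersetCard.1 hA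
  intro v hv v' hv' h
  obtain ⟨hv1, -⟩ := mem_Icc.1 hv
  obtain ⟨-, hv'⟩ := mem_Icc.1 hv'
  unfold IsRightHeavy at hR
  unfold leftExt
  rcases lt_or_ge v' m with hc | hc
  · rw [if_pos (show v < m by omega), if_pos hc]
    have := nth_lt_nth (show r - m + v < r - m + v' by omega) (show r - m + v' < A.card by omega)
    have := nth_le_nth (show r - m ≤ r - m + v by omega) (show r - m + v < A.card by omega)
    omega
  rw [if_neg (show ¬ v' < m by omega)]
  rcases lt_or_ge v m with hd | hd
  · rw [if_pos hd]
    have := nth_le_nth (show r - m + v ≤ r - 1 by omega) (show r - 1 < A.card by omega)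
    have := nth_le_nth (show r - m ≤ r - m + v by omega) (show r - m + v < A.card by omega)
    have := (nth_mem_Icc hA1 (show r - 1 < A.card by omega)).2
    have := nth_le_nth (show 0 ≤ v' - m by omega) (show v' - m < A.card by omega)
    omega
  · rw [if_neg (show ¬ v < m by omega)]
    exact nth_lt_nth (by omega) (by omega)

theorem leftExt_mem_Icc (hmr : m ≤ r) (hA : A ∈ (Icc 1 n).powersetCard r)
    {v : ℕ} (hv : v ∈ Icc 1 (r + m - 1)) : leftExt r m A v ∈ Icc 1 n := by
  obtain ⟨hA1, hA2⟩ := mem_powersetCard.1 hA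
  obtain ⟨hv1, hv⟩ := mem_Icc.1 hv
  rw [leftExt, mem_Icc]
  rcases lt_or_ge v m with hc | hc
  · rw [if_pos hc]
    have := nth_lt_nth (show r - m < r - m + v by omega) (show r - m + v < A.card by omega)
    have := (nth_mem_Icc hA1 (show r - m + v < A.card by omega)).2
    omega
  · rw [if_neg (show ¬ v < m by omega)]
    exact nth_mem_Icc hA1 (by omega)

theorem rightExt_windows_ne_of_lt (hmr : m ≤ r) (hA : A.card = r)
    (hA' : A' ∈ (Icc 1 n).powersetCard r) (hL : IsLeftHeavy n r m A) {i i' : ℕ} (hi : 1 ≤ i)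
    (hi' : i' ≤ m) (hlt : i < i') :
    ¬ ∀ k < r, rightExt n r m A (i + k) = rightExt n r m A' (i' + k) := by
  obtain ⟨hA'1, hA'2⟩ := mem_powersetCard.1 hA'
  -- with `d = i' - i`, the windows give `a_{m-d} + a_{r+1-d} = n + 1 + a'₁`
  intro H
  have e1 := H (m - i') (by omega)
  have e2 := H (r + 1 - i') (by omega)
  rw [rightExt, rightExt, if_pos (show i + (m - i') ≤ r by omega),
    if_pos (show i' + (m - i') ≤ r by omega),
    show i + (m - i') - 1 = m - (i' - i) - 1 by omega,
    show i' + (m - i') - 1 = m - 1 by omega] at e1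
  rw [rightExt, rightExt, if_pos (show i + (r + 1 - i') ≤ r by omega),
    if_neg (show ¬ i' + (r + 1 - i') ≤ r by omega),
    show i + (r + 1 - i') - 1 = r - (i' - i) by omega,
    show i' + (r + 1 - i') - r - 1 = 0 by omega] at e2
  have := nth_lt_nth (show m - (i' - i) - 1 < m - 1 by omega) (show m - 1 < A.card by omega)
  have := nth_le_nth (show r - (i' - i) ≤ r - 1 by omega) (show r - 1 < A.card by omega)
  have := (nth_mem_Icc hA'1 (show 0 < A'.card by omega)).1
  have := (nth_mem_Icc hA'1 (show m - 1 < A'.card by omega)).2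
  unfold IsLeftHeavy at hL
  omega

theorem eq_of_rightExt_windows_eq (hmr : m ≤ r)
    (hA : A ∈ (Icc 1 n).powersetCard r) (hA' : A' ∈ (Icc 1 n).powersetCard r)
    (hL : IsLeftHeavy n r m A) (hL' : IsLeftHeavy n r m A') {i i' : ℕ}
    (hi : i ∈ Icc 1 m) (hi' : i' ∈ Icc 1 m)
    (H : ∀ k < r, rightExt n r m A (i + k) = rightExt n r m A' (i' + k)) : A = A' := by
  obtain ⟨hA1, hA2⟩ := mem_powersetCard.1 hA
  obtain ⟨hA'1, hA'2⟩ := mem_powersetCard.1 hA'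
  rw [mem_Icc] at hi hi'
  obtain rfl : i = i' := by
    by_contra hne
    rcases Nat.lt_or_gt_of_ne hne with h | h
    · exact rightExt_windows_ne_of_lt hmr hA2 hA' hL hi.1 hi'.2 h H
    · exact rightExt_windows_ne_of_lt hmr hA'2 hA hL' hi'.1 hi.2 h fun k hk => (H k hk).symm
  have hmid := H (m - i) (by omega)
  rw [rightExt, rightExt, if_pos (show i + (m - i) ≤ r by omega),
    if_pos (show i + (m - i) ≤ r by omega),
    show i + (m - i) - 1 = m - 1 by omega] at hmid
  refine ext_nth hA2 hA'2 fun k hk => ?_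
  rcases Nat.lt_or_ge k (i - 1) with hki | hki
  · -- `a_{k+1}` sits, shifted by `n + 1 - a_m`, at position `r + k + 1` of the extension
    have h0 := H (r + k + 1 - i) (by omega)
    rw [rightExt, rightExt, if_neg (show ¬ i + (r + k + 1 - i) ≤ r by omega),
      if_neg (show ¬ i + (r + k + 1 - i) ≤ r by omega),
      show i + (r + k + 1 - i) - r - 1 = k by omega] at h0
    have := (nth_mem_Icc hA1 (show m - 1 < A.card by omega)).2
    omega
  · have h0 := H (k + 1 - i) (by omega)
    rwa [rightExt, rightExt, if_pos (show i + (k + 1 - i) ≤ r by omega),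
      if_pos (show i + (k + 1 - i) ≤ r by omega),
      show i + (k + 1 - i) - 1 = k by omega] at h0

theorem leftExt_windows_ne_of_lt (hmr : m ≤ r) (hA : A.card = r)
    (hA' : A' ∈ (Icc 1 n).powersetCard r) (hR : IsRightHeavy n r m A) {i i' : ℕ} (hi : i ≤ m)
    (hi' : 1 ≤ i') (hlt : i' < i) :
    ¬ ∀ k < r, leftExt r m A (i + k) = leftExt r m A' (i' + k) := by
  obtain ⟨hA'1, hA'2⟩ := mem_powersetCard.1 hA'
  -- with `d = i - i'`, the windows give `a₁ + a_{r-m+1+d} = a'_{r+1-d} ≤ n`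
  intro H
  have e1 := H (m - i) (by omega)
  have e2 := H (r - i') (by omega)
  rw [leftExt, leftExt, if_neg (show ¬ i + (m - i) < m by omega),
    if_pos (show i' + (m - i) < m by omega), show i + (m - i) - m = 0 by omega,
    show r - m + (i' + (m - i)) = r - (i - i') by omega] at e1
  rw [leftExt, leftExt, if_neg (show ¬ i + (r - i') < m by omega),
    if_neg (show ¬ i' + (r - i') < m by omega),
    show i + (r - i') - m = r + (i - i') - m by omega,
    show i' + (r - i') - m = r - m by omega] at e2
  have := nth_lt_nth (show r - m < r + (i - i') - m by omega)
    (show r + (i - i') - m < A.card by omega)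
  have := (nth_mem_Icc hA'1 (show r - (i - i') < A'.card by omega)).2
  have := nth_le_nth (show r - m ≤ r - (i - i') by omega) (show r - (i - i') < A'.card by omega)
  unfold IsRightHeavy at hR
  omega

theorem eq_of_leftExt_windows_eq (hmr : m ≤ r)
    (hA : A ∈ (Icc 1 n).powersetCard r) (hA' : A' ∈ (Icc 1 n).powersetCard r)
    (hR : IsRightHeavy n r m A) (hR' : IsRightHeavy n r m A') {i i' : ℕ}
    (hi : i ∈ Icc 1 m) (hi' : i' ∈ Icc 1 m)
    (H : ∀ k < r, leftExt r m A (i + k) = leftExt r m A' (i' + k)) : A = A' := by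
  obtain ⟨hA1, hA2⟩ := mem_powersetCard.1 hA
  obtain ⟨hA'1, hA'2⟩ := mem_powersetCard.1 hA'
  rw [mem_Icc] at hi hi'
  obtain rfl : i = i' := by
    by_contra hne
    rcases Nat.lt_or_gt_of_ne hne with h | h
    · exact leftExt_windows_ne_of_lt hmr hA'2 hA hR' hi'.2 hi.1 h fun k hk => (H k hk).symm
    · exact leftExt_windows_ne_of_lt hmr hA2 hA' hR hi.2 hi'.1 h H
  have hmid := H (r - i) (by omega)
  rw [leftExt, leftExt, if_neg (show ¬ i + (r - i) < m by omega),
    if_neg (show ¬ i + (r - i) < m by omega), show i + (r - i) - m = r - m by omega] at hmid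
  refine ext_nth hA2 hA'2 fun k hk => ?_
  rcases Nat.lt_or_ge k (r - m + i) with hki | hki
  · have h0 := H (m + k - i) (by omega)
    rwa [leftExt, leftExt, if_neg (show ¬ i + (m + k - i) < m by omega),
      if_neg (show ¬ i + (m + k - i) < m by omega),
      show i + (m + k - i) - m = k by omega] at h0
  · -- `a_{k+1}` sits, shifted by `-a_{r-m+1}`, at position `k - (r - m)` of the extension
    have h0 := H (k - (r - m) - i) (by omega)
    rw [leftExt, leftExt, if_pos (show i + (k - (r - m) - i) < m by omega),
      if_pos (show i + (k - (r - m) - i) < m by omega),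
      show r - m + (i + (k - (r - m) - i)) = k by omega] at h0
    have := nth_le_nth (show r - m ≤ k by omega) (show k < A.card by omega)
    have := nth_le_nth (show r - m ≤ k by omega) (show k < A'.card by omega)
    omega

theorem rightExt_windows_ne_leftExt_windows (hmr : m ≤ r)
    (hA : A ∈ (Icc 1 n).powersetCard r) (hA' : A' ∈ (Icc 1 n).powersetCard r)
    (hL : IsLeftHeavy n r m A) (hR : IsRightHeavy n r m A') {i i' : ℕ}
    (hi : i ∈ Icc 1 m) (hi' : i' ∈ Icc 1 m) :
    ¬ ∀ k < r, rightExt n r m A (i + k) = leftExt r m A' (i' + k) := by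
  obtain ⟨hA1, hA2⟩ := mem_powersetCard.1 hA
  obtain ⟨hA'1, hA'2⟩ := mem_powersetCard.1 hA'
  rw [mem_Icc] at hi hi'
  unfold IsLeftHeavy at hL
  unfold IsRightHeavy at hR
  intro H
  have e1 := H (m - i) (by omega)
  rw [rightExt, if_pos (show i + (m - i) ≤ r by omega), show i + (m - i) - 1 = m - 1 by omega,
    leftExt] at e1
  rcases le_or_gt i i' with hii | hii
  · have e2 := H (r - i) (by omega)
    rw [if_neg (show ¬ i' + (m - i) < m by omega), show i' + (m - i) - m = i' - i by omega] at e1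
    rw [rightExt, leftExt, if_pos (show i + (r - i) ≤ r by omega),
      if_neg (show ¬ i' + (r - i) < m by omega), show i + (r - i) - 1 = r - 1 by omega,
      show i' + (r - i) - m = r - m + (i' - i) by omega] at e2
    have := nth_le_nth (show 0 ≤ i' - i by omega) (show i' - i < A'.card by omega)
    have := nth_le_nth (show r - m ≤ r - m + (i' - i) by omega)
      (show r - m + (i' - i) < A'.card by omega)
    omega
  rw [if_pos (show i' + (m - i) < m by omega),
    show r - m + (i' + (m - i)) = r - (i - i') by omega] at e1
  have := (nth_mem_Icc hA'1 (show r - (i - i') < A'.card by omega)).2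
  have := nth_le_nth (show r - m ≤ r - (i - i') by omega) (show r - (i - i') < A'.card by omega)
  have := (nth_mem_Icc hA1 (show m - 1 < A.card by omega)).2
  rcases le_or_gt i (i' + (r - m)) with hir | hir
  · have e2 := H (r - i') (by omega)
    rw [rightExt, leftExt, if_neg (show ¬ i + (r - i') ≤ r by omega),
      if_neg (show ¬ i' + (r - i') < m by omega), show i + (r - i') - r - 1 = i - i' - 1 by omega,
      show i' + (r - i') - m = r - m by omega] at e2
    have := (nth_mem_Icc hA1 (show i - i' - 1 < A.card by omega)).1
    omega
  · have e2 := H (m - i') (by omega)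
    rw [rightExt, leftExt, if_neg (show ¬ i + (m - i') ≤ r by omega),
      if_neg (show ¬ i' + (m - i') < m by omega),
      show i + (m - i') - r - 1 = i - i' - (r - m) - 1 by omega,
      show i' + (m - i') - m = 0 by omega] at e2
    have := nth_le_nth (show 0 ≤ r - m by omega) (show r - m < A'.card by omega)
    have := (nth_mem_Icc hA1 (show i - i' - (r - m) - 1 < A.card by omega)).1
    omega

end Extensions

noncomputable def pathExt (n r m : ℕ) (A : Finset ℕ) : ℕ → ℕ :=
  if IsLeftHeavy n r m A then rightExt n r m A else leftExt r m A

section PathExt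

variable {n m r : ℕ} {A A' : Finset ℕ}

theorem pathExt_of_isLeftHeavy (hL : IsLeftHeavy n r m A) : pathExt n r m A = rightExt n r m A :=
  if_pos hL

theorem pathExt_of_isRightHeavy (hm : 1 ≤ m) (hmr : m ≤ r) (hA : A.card = r)
    (hR : IsRightHeavy n r m A) : pathExt n r m A = leftExt r m A :=
  if_neg fun hL => not_isRightHeavy_of_isLeftHeavy hm hmr hA hL hR

theorem strictMonoOn_pathExt (hm : 1 ≤ m) (hmr : m ≤ r) (hA : A ∈ heavySets n r m) :
    StrictMonoOn (pathExt n r m A) ↑(Icc 1 (r + m - 1)) := by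
  obtain ⟨hAP, hL | hR⟩ := mem_filter.1 hA
  · rw [pathExt_of_isLeftHeavy hL]
    exact strictMonoOn_rightExt hmr hAP hL
  · rw [pathExt_of_isRightHeavy hm hmr (mem_powersetCard.1 hAP).2 hR]
    exact strictMonoOn_leftExt hmr hAP hR

theorem pathExt_mem_Icc (hm : 1 ≤ m) (hmr : m ≤ r) (hA : A ∈ heavySets n r m) {v : ℕ}
    (hv : v ∈ Icc 1 (r + m - 1)) : pathExt n r m A v ∈ Icc 1 n := by
  obtain ⟨hAP, hL | hR⟩ := mem_filter.1 hA
  · rw [pathExt_of_isLeftHeavy hL]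
    exact rightExt_mem_Icc hmr hAP hv
  · rw [pathExt_of_isRightHeavy hm hmr (mem_powersetCard.1 hAP).2 hR]
    exact leftExt_mem_Icc hmr hAP hv

theorem isCopy_pathExt (hm : 1 ≤ m) (hmr : m ≤ r) (hA : A ∈ heavySets n r m) :
    IsCopy n (r + m - 1) (pathEdges r (r + m - 1))
      ((pathEdges r (r + m - 1)).image (·.image (pathExt n r m A))) :=
  ⟨pathExt n r m A, strictMonoOn_pathExt hm hmr hA, fun _ hv => pathExt_mem_Icc hm hmr hA hv, rfl⟩

theorem eq_of_pathExt_windows_eq (hm : 1 ≤ m) (hmr : m ≤ r) (hA : A ∈ heavySets n r m)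
    (hA' : A' ∈ heavySets n r m) {i i' : ℕ} (hi : i ∈ Icc 1 m) (hi' : i' ∈ Icc 1 m)
    (H : ∀ k < r, pathExt n r m A (i + k) = pathExt n r m A' (i' + k)) : A = A' := by
  obtain ⟨hAP, hL | hR⟩ := mem_filter.1 hA <;> obtain ⟨hA'P, hL' | hR'⟩ := mem_filter.1 hA'
  · rw [pathExt_of_isLeftHeavy hL, pathExt_of_isLeftHeavy hL'] at H
    exact eq_of_rightExt_windows_eq hmr hAP hA'P hL hL' hi hi' H
  · rw [pathExt_of_isLeftHeavy hL,
      pathExt_of_isRightHeavy hm hmr (mem_powersetCard.1 hA'P).2 hR'] at H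
    exact absurd H (rightExt_windows_ne_leftExt_windows hmr hAP hA'P hL hR' hi hi')
  · rw [pathExt_of_isRightHeavy hm hmr (mem_powersetCard.1 hAP).2 hR,
      pathExt_of_isLeftHeavy hL'] at H
    exact absurd (fun k hk => (H k hk).symm)
      (rightExt_windows_ne_leftExt_windows hmr hA'P hAP hL' hR hi' hi)
  · rw [pathExt_of_isRightHeavy hm hmr (mem_powersetCard.1 hAP).2 hR,
      pathExt_of_isRightHeavy hm hmr (mem_powersetCard.1 hA'P).2 hR'] at H
    exact eq_of_leftExt_windows_eq hmr hAP hA'P hR hR' hi hi' H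

theorem window_subset {i : ℕ} (hi : i ∈ Icc 1 m) : Icc i (i + r - 1) ⊆ Icc 1 (r + m - 1) :=
  Icc_subset_Icc (mem_Icc.1 hi).1 (by have := mem_Icc.1 hi; omega)

theorem card_add_card_heavySets_le (hm : 1 ≤ m) (hmr : m ≤ r) {G : Finset (Finset ℕ)}
    (hG : G ⊆ (Icc 1 n).powersetCard r)
    (hfree : ∀ C, IsCopy n (r + m - 1) (pathEdges r (r + m - 1)) C → ¬ C ⊆ G) :
    G.card + (heavySets n r m).card ≤ n.choose r := by
  have hwindow : ∀ A ∈ heavySets n r m,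
      ∃ i ∈ Icc 1 m, (Icc i (i + r - 1)).image (pathExt n r m A) ∉ G := by
    intro A hA
    obtain ⟨e, he, heG⟩ := not_subset.1 (hfree _ (isCopy_pathExt hm hmr hA))
    obtain ⟨_, he0, rfl⟩ := mem_image.1 he
    obtain ⟨i, hi, rfl⟩ := mem_image.1 he0
    exact ⟨i, by rw [mem_Icc] at hi ⊢; omega, heG⟩
  choose! idx hidx hidxG using hwindow
  have hmono : ∀ A ∈ heavySets n r m,
      StrictMonoOn (pathExt n r m A) ↑(Icc (idx A) (idx A + r - 1)) := fun A hA =>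
    (strictMonoOn_pathExt hm hmr hA).mono (coe_subset.2 (window_subset (hidx A hA)))
  have hmaps : Set.MapsTo (fun A => (Icc (idx A) (idx A + r - 1)).image (pathExt n r m A))
      ↑(heavySets n r m) ↑((Icc 1 n).powersetCard r \ G) := fun A hA =>
    mem_sdiff.2 ⟨image_Icc_mem_powersetCard (hmono A hA)
      (fun _ hv => pathExt_mem_Icc hm hmr hA (window_subset (hidx A hA) hv)) (by omega),
      hidxG A hA⟩
  have hinj : Set.InjOn (fun A => (Icc (idx A) (idx A + r - 1)).image (pathExt n r m A))
      ↑(heavySets n r m) := fun A hA A' hA' h =>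
    eq_of_pathExt_windows_eq hm hmr hA hA' (hidx A hA) (hidx A' hA') fun k hk => by
      rw [← nth_image_Icc (hmono A hA) (by omega) hk, ← nth_image_Icc (hmono A' hA') (by omega) hk]
      exact congrArg (·.nth k) h
  have hcard := card_le_card_of_injOn _ hmaps hinj
  have hGcard := card_le_card hG
  rw [card_sdiff_of_subset hG] at hcard
  rw [card_powersetCard, Nat.card_Icc, Nat.add_sub_cancel] at hcard hGcard
  omega

theorem not_subset_sdiff_heavySets (hm : 1 ≤ m) (hmr : m ≤ r) {C : Finset (Finset ℕ)}
    (hC : IsCopy n (r + m - 1) (loosePathEdges r (r + m - 1)) C) :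
    ¬ C ⊆ (Icc 1 n).powersetCard r \ heavySets n r m := by
  obtain ⟨f, hf, hmaps, rfl⟩ := hC
  intro hsub
  have hedge : ∀ e ∈ loosePathEdges r (r + m - 1), e.image f ∉ heavySets n r m := fun e he =>
    (mem_sdiff.1 (hsub (mem_image_of_mem _ he))).2
  have hfirst := hedge (Icc 1 r) (mem_insert_self _ _)
  have hlast := hedge _ (mem_insert_of_mem (mem_singleton_self _))
  rw [show r + m - 1 - r + 1 = m by omega] at hlast
  have hf1 : StrictMonoOn f ↑(Icc 1 r) :=
    hf.mono (coe_subset.2 (Icc_subset_Icc le_rfl (by omega)))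
  have hf2 : StrictMonoOn f ↑(Icc m (r + m - 1)) :=
    hf.mono (coe_subset.2 (Icc_subset_Icc hm le_rfl))
  have hE1 : (Icc 1 r).image f ∈ (Icc 1 n).powersetCard r :=
    image_Icc_mem_powersetCard hf1 (fun v hv => hmaps v (Icc_subset_Icc le_rfl (by omega) hv))
      (by omega)
  have hE2 : (Icc m (r + m - 1)).image f ∈ (Icc 1 n).powersetCard r :=
    image_Icc_mem_powersetCard hf2 (fun v hv => hmaps v (Icc_subset_Icc hm le_rfl hv)) (by omega)
  simp only [heavySets, mem_filter, not_and, not_or] at hfirst hlast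
  have hL := (hfirst hE1).1
  have hR := (hlast hE2).2
  unfold IsLeftHeavy at hL
  unfold IsRightHeavy at hR
  rw [nth_image_Icc hf1 (by omega) (show m - 1 < r by omega),
    nth_image_Icc hf1 (by omega) (show r - 1 < r by omega),
    show 1 + (m - 1) = m by omega, show 1 + (r - 1) = r by omega] at hL
  rw [nth_image_Icc hf2 (by omega) (show 0 < r by omega),
    nth_image_Icc hf2 (by omega) (show r - m < r by omega),
    add_zero, show m + (r - m) = r by omega] at hR
  omega

end PathExt

section Turan

variable {n r s : ℕ} {E E' : Finset (Finset ℕ)}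

theorem card_le_exNum {G : Finset (Finset ℕ)} (hG : G ⊆ (Icc 1 n).powersetCard r)
    (hfree : ∀ C, IsCopy n s E C → ¬ C ⊆ G) : G.card ≤ exNum n r s E :=
  le_csSup ⟨n.choose r, by rintro _ ⟨G', hG', -, rfl⟩; simpa using card_le_card hG'⟩
    ⟨G, hG, hfree, rfl⟩

theorem exNum_le {K : ℕ} (h : ∀ G ⊆ (Icc 1 n).powersetCard r,
    (∀ C, IsCopy n s E C → ¬ C ⊆ G) → G.card ≤ K) : exNum n r s E ≤ K :=
  csSup_le' fun _ ⟨G, hG, hfree, hcard⟩ => hcard ▸ h G hG hfree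

theorem exNum_mono (hE : E ⊆ E') : exNum n r s E ≤ exNum n r s E' :=
  exNum_le fun _ hG hfree => card_le_exNum hG fun _ ⟨f, hf, hmaps, hC⟩ hCG =>
    hfree _ ⟨f, hf, hmaps, rfl⟩ ((image_subset_image hE).trans (hC ▸ hCG))

end Turan

theorem loosePathEdges_subset_pathEdges {r s : ℕ} (hrs : r ≤ s) :
    loosePathEdges r s ⊆ pathEdges r s := by
  intro e he
  rw [loosePathEdges, mem_insert, mem_singleton] at he
  rw [pathEdges, mem_image]
  rcases he with rfl | rfl
  · exact ⟨1, mem_Icc.2 ⟨le_rfl, by omega⟩, by rw [Nat.add_sub_cancel_left]⟩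
  · exact ⟨s - r + 1, mem_Icc.2 ⟨by omega, le_rfl⟩, by congr 1; omega⟩

theorem stmt3_general (n r s m : ℕ) (hev : Even n)
    (hr : 2 ≤ r) (hrs : r ≤ s) (hs : s ≤ 2 * r - 1) (hm : m = s - r + 1) :
    exNum n r s (loosePathEdges r s) = exNum n r s (pathEdges r s) ∧
    exNum n r s (pathEdges r s) = n.choose r - 2 * hcount n r m - hcount n (r - 1) m := by
  obtain rfl : s = r + m - 1 := by omega
  have hm1 : 1 ≤ m := by omega
  have hmr : m ≤ r := by omega
  have hheavy := card_heavySets hev hm1 hmr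
  have hP : ((Icc 1 n).powersetCard r).card = n.choose r := by simp
  have upper : exNum n r (r + m - 1) (pathEdges r (r + m - 1)) ≤
      n.choose r - (heavySets n r m).card :=
    exNum_le fun G hG hfree => by have := card_add_card_heavySets_le hm1 hmr hG hfree; omega
  have lower : n.choose r - (heavySets n r m).card ≤
      exNum n r (r + m - 1) (loosePathEdges r (r + m - 1)) := by
    have hsub : heavySets n r m ⊆ (Icc 1 n).powersetCard r := filter_subset _ _
    rw [← hP, ← card_sdiff_of_subset hsub]
    exact card_le_exNum sdiff_subset fun _ hC => not_subset_sdiff_heavySets hm1 hmr hC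
  have mono : exNum n r (r + m - 1) (loosePathEdges r (r + m - 1)) ≤
      exNum n r (r + m - 1) (pathEdges r (r + m - 1)) :=
    exNum_mono (loosePathEdges_subset_pathEdges hrs)
  omega

/-- For even `n > 0`, `2 ≤ r ≤ s ≤ 2r-1` and `m = s-r+1`,
`ex(n, LP^{(r)}_s) = ex(n, P^{(r)}_s) = C(n,r) - 2·h(n,r,m) - h(n,r-1,m)`. -/
theorem stmt3 (n r s m : ℕ) (hn : 0 < n) (hev : Even n)
    (hr : 2 ≤ r) (hrs : r ≤ s) (hs : s ≤ 2 * r - 1) (hm : m = s - r + 1) :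
    exNum n r s (loosePathEdges r s) = exNum n r s (pathEdges r s) ∧
    exNum n r s (pathEdges r s) = n.choose r - 2 * hcount n r m - hcount n (r - 1) m :=
  stmt3_general n r s m hev hr hrs hs hm
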